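/- Assume that for some constant γ > 0 the following holds: for every abelian group G and every non-empty finite A ⊂ G with ΔH(A) ≤ γ there is a finite subgroup H of G with d(U_A, U_H) ≤ 12·ΔH(A). Then there exists θ > 0 such that for every ε ∈ (0, exp(-2)), every abelian group G, and every non-empty finite distributional ε-approximate group A ⊂ G, if 240·log(ε⁻¹|A|)·ε ≤ θ then there exists a finite subgroup H of G and x ∈ G with |A Δ (H+{x})| ≤ 240·log(ε⁻¹|A|)·ε·|H|. -/

import Mathlib

open Real
open scoped Pointwise symmDiff

/-- Shannon entropy of a (finitely supported) distribution, natural log,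
with the convention `0 * log 0 = 0`. -/
noncomputable def entropy {α : Type*} (p : α → ℝ) : ℝ :=
  -∑ᶠ x, p x * Real.log (p x)

/-- `p` is a finitely supported probability mass function. -/
def IsPMF {α : Type*} (p : α → ℝ) : Prop :=
  (∀ x, 0 ≤ p x) ∧ (Function.support p).Finite ∧ ∑ᶠ x, p x = 1

/-- Distribution of `X + Y` for independent `X ~ p`, `Y ~ q`. -/
noncomputable def conv {G : Type*} [AddCommGroup G] (p q : G → ℝ) : G → ℝ :=
  fun z => ∑ᶠ x, p x * q (z - x)

/-- The uniform distribution on a set `A`. -/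
noncomputable def uniformSet {G : Type*} (A : Set G) : G → ℝ :=
  A.indicator fun _ => 1 / A.ncard

/-- Entropic Ruzsa distance between two distributions. -/
noncomputable def rdist {G : Type*} [AddCommGroup G] (p q : G → ℝ) : ℝ :=
  entropy (conv p q) - (entropy p + entropy q) / 2

/-- Probability of an event under distribution `p`. -/
noncomputable def probOf {α : Type*} (p : α → ℝ) (S : Set α) : ℝ :=
  ∑ᶠ x ∈ S, p x

/-- `A` is a distributional ε-approximate group. -/
def IsDistribApproxGroup {G : Type*} [AddCommGroup G] (ε : ℝ) (A : Set G) : Prop :=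
  ∃ U : Set G, U.ncard = A.ncard ∧
    (1 - ε) * (A.ncard : ℝ) ^ 2 ≤
      ({p : G × G | p.1 ∈ A ∧ p.2 ∈ A ∧ p.1 + p.2 ∈ U}.ncard : ℝ)

/-!
If `U_A + U_A` lands in a set of size `|A|` with probability `1 - ε`, grouping the entropy of
`U_A + U_A` over that set and its complement (Jensen on each part) gives
`ΔH(A) ≤ 2 ε log (ε⁻¹ |A|) = K / 120`, where `K = 240 ε log (ε⁻¹ |A|)`. So the black box applies
and yields a finite subgroup `H` with `d := d(U_A, U_H) ≤ K / 10`.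

Shannon entropy dominates min-entropy, and the largest atom of `U_A + U_H` is
`N / (|A| |H|)` with `N = |A ∩ (H + x)|` for some coset `H + x`. Hence
`log N ≥ (log |A| + log |H|) / 2 - d`, and since `N ≤ min |A| |H|` this forces
`|A ∆ (H + x)| = |A| + |H| - 2N ≤ 2d (e^{2d} + 1) |H| ≤ K |H|`.
-/

open Finset

lemma negMulLog_le_negMulLog {x y : ℝ} (hx : 0 ≤ x) (hxy : x ≤ y) (hy : y ≤ exp (-1)) :
    negMulLog x ≤ negMulLog y := by
  rcases hx.eq_or_lt with rfl | hx
  · rw [negMulLog_zero]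
    exact negMulLog_nonneg hxy (hy.trans (exp_le_one_iff.2 (by norm_num)))
  have hy0 : 0 < y := hx.trans_le hxy
  have hlogy : log y ≤ -1 := (log_le_iff_le_exp hy0).2 hy
  have hquot : log (y / x) ≤ y / x - 1 := log_le_sub_one_of_pos (by positivity)
  rw [log_div hy0.ne' hx.ne'] at hquot
  have h := mul_le_mul_of_nonneg_left hquot hx.le
  rw [mul_sub, mul_sub, mul_div_cancel₀ _ hx.ne'] at h
  -- `h` gives `negMulLog x - negMulLog y ≤ (y - x) * (1 + log y)`, and `1 + log y ≤ 0`
  simp only [negMulLog]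
  nlinarith

lemma add_sub_two_mul_le_of_log_le {a h N d : ℝ} (hN : 0 < N) (hNa : N ≤ a) (hNh : N ≤ h)
    (hlog : (log a + log h) / 2 - d ≤ log N) : a + h - 2 * N ≤ 2 * d * (exp (2 * d) + 1) * h := by
  have ha : 0 < a := hN.trans_le hNa
  have hh : 0 < h := hN.trans_le hNh
  have hNa' := log_le_log hN hNa
  have hNh' := log_le_log hN hNh
  -- `y ≤ N * exp (2 * d)` and `exp (-2 * d) ≥ 1 - 2 * d` give `y - N ≤ 2 * d * y`
  have hsub : ∀ y, 0 < y → log y - 2 * d ≤ log N → y - N ≤ 2 * d * y := by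
    intro y hy hyN
    have hexp : y * exp (-(2 * d)) ≤ N := by
      rw [← exp_log hy, ← exp_add, ← exp_log hN]
      exact exp_le_exp.2 (by linarith)
    nlinarith [add_one_le_exp (-(2 * d))]
  have hah : a ≤ exp (2 * d) * h := by
    rw [← exp_log ha, ← exp_log hh, ← exp_add]
    exact exp_le_exp.2 (by linarith)
  have hd : 0 ≤ d := by linarith
  nlinarith [hsub a ha (by linarith), hsub h hh (by linarith)]

lemma Set.ncard_symmDiff_add_two_mul_ncard_inter {α : Type*} {s t : Set α} (hs : s.Finite)
    (ht : t.Finite) : (s ∆ t).ncard + 2 * (s ∩ t).ncard = s.ncard + t.ncard := by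
  rw [symmDiff_eq_sup_sdiff_inf, ← Set.ncard_union_add_ncard_inter s t hs ht]
  have := Set.ncard_sdiff_add_ncard_of_subset (s := s ∩ t) (t := s ∪ t)
    (Set.inter_subset_left.trans Set.subset_union_left) (hs.union ht)
  simp only [Set.sup_eq_union, Set.inf_eq_inter] at this ⊢
  omega

lemma finsum_indicator_const {α : Type*} {S : Set α} (hS : S.Finite) (c : ℝ) :
    ∑ᶠ x, S.indicator (fun _ => c) x = S.ncard * c := by
  rw [finsum_eq_sum_of_support_subset _ (s := hS.toFinset) (by simp),
    Finset.sum_congr rfl fun x hx => Set.indicator_of_mem (hS.mem_toFinset.1 hx) _,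
    Finset.sum_const, nsmul_eq_mul, Set.ncard_eq_toFinset_card S hS]

section Entropy

variable {α : Type*} {p : α → ℝ}

lemma entropy_eq_sum_negMulLog {s : Finset α} (hs : Function.support p ⊆ s) :
    entropy p = ∑ x ∈ s, negMulLog (p x) := by
  have hs' : Function.support (fun x => p x * log (p x)) ⊆ s :=
    fun x hx => hs fun h0 => hx (by simp [h0])
  rw [entropy, finsum_eq_sum_of_support_subset _ hs', ← Finset.sum_neg_distrib]
  simp [negMulLog]

lemma sum_negMulLog_le {t : Finset α} {w : α → ℝ} (hw : ∀ i ∈ t, 0 ≤ w i) {n : ℝ}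
    (hn : (#t : ℝ) ≤ n) :
    ∑ i ∈ t, negMulLog (w i) ≤ (∑ i ∈ t, w i) * log n + negMulLog (∑ i ∈ t, w i) := by
  rcases t.eq_empty_or_nonempty with rfl | ht
  · simp
  have hcard : (0 : ℝ) < #t := by exact_mod_cast ht.card_pos
  -- Jensen for the concave `negMulLog`, with uniform weights on `t`
  have hjensen := concaveOn_negMulLog.le_map_sum (t := t) (w := fun _ => (#t : ℝ)⁻¹) (p := w)
    (fun _ _ => by positivity) (by simp [hcard.ne']) (fun i hi => Set.mem_Ici.2 (hw i hi))
  simp only [smul_eq_mul, ← Finset.mul_sum] at hjensen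
  calc ∑ i ∈ t, negMulLog (w i)
      ≤ (∑ i ∈ t, w i) * log #t + negMulLog (∑ i ∈ t, w i) := by
        have h := mul_le_mul_of_nonneg_left hjensen hcard.le
        rw [← mul_assoc, mul_inv_cancel₀ hcard.ne', one_mul, negMulLog_mul,
          negMulLog, log_inv] at h
        field_simp at h
        exact h
    _ ≤ (∑ i ∈ t, w i) * log n + negMulLog (∑ i ∈ t, w i) := by
        gcongr
        exact Finset.sum_nonneg hw

lemma entropy_uniformSet {A : Set α} (hA : A.Finite) (hA0 : A.Nonempty) :
    entropy (uniformSet A) = log A.ncard := by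
  have hcard : (A.ncard : ℝ) ≠ 0 := by exact_mod_cast ((Set.ncard_pos hA).2 hA0).ne'
  have hsupp : Function.support (uniformSet A) ⊆ hA.toFinset := by
    simp [uniformSet]
  rw [entropy_eq_sum_negMulLog hsupp,
    Finset.sum_congr rfl fun x hx => by
      rw [uniformSet, Set.indicator_of_mem (hA.mem_toFinset.1 hx)],
    Finset.sum_const, nsmul_eq_mul, ← Set.ncard_eq_toFinset_card A hA, negMulLog, one_div,
    log_inv]
  field_simp

namespace IsPMF

lemma sum_eq_one (hp : IsPMF p) {s : Finset α} (hs : Function.support p ⊆ s) :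
    ∑ x ∈ s, p x = 1 := by
  rw [← finsum_eq_sum_of_support_subset _ hs, hp.2.2]

lemma exists_neg_log_le_entropy (hp : IsPMF p) : ∃ x, 0 < p x ∧ -log (p x) ≤ entropy p := by
  set s := hp.2.1.toFinset
  have hs : Function.support p ⊆ s := by simp [s]
  have hne : s.Nonempty := by
    by_contra h
    have := hp.sum_eq_one hs
    simp [Finset.not_nonempty_iff_eq_empty.1 h] at this
  obtain ⟨x, hxs, hmax⟩ := s.exists_max_image p hne
  have hx : 0 < p x := (hp.1 x).lt_of_ne' (by simpa [s] using hxs)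
  refine ⟨x, hx, ?_⟩
  calc -log (p x) = ∑ y ∈ s, p y * -log (p x) := by rw [← Finset.sum_mul, hp.sum_eq_one hs, one_mul]
    _ ≤ ∑ y ∈ s, negMulLog (p y) := by
        refine Finset.sum_le_sum fun y hy => ?_
        have hy : 0 < p y := (hp.1 y).lt_of_ne' (by simpa [s] using hy)
        rw [negMulLog, neg_mul, mul_neg]
        gcongr
        exact hmax y (by simpa [s] using hy.ne')
    _ = entropy p := (entropy_eq_sum_negMulLog hs).symm

lemma entropy_le_of_one_sub_le_sum (hp : IsPMF p) {s u : Finset α}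
    (hs : Function.support p ⊆ s) {n ε : ℝ} (hn : 1 ≤ n) (hsn : (#s : ℝ) ≤ n ^ 2)
    (hun : (#u : ℝ) ≤ n) (hu : 1 - ε ≤ ∑ x ∈ u, p x) (hε : ε ≤ exp (-1)) :
    entropy p ≤ (1 + ε) * log n + ε + negMulLog ε := by
  classical
  have hsu : Function.support p ⊆ ↑(s ∪ u) := hs.trans (by simp)
  set W := ∑ x ∈ u, p x
  set W' := ∑ x ∈ s \ u, p x
  have hsplit : ∀ f : α → ℝ, ∑ x ∈ s ∪ u, f x = ∑ x ∈ s \ u, f x + ∑ x ∈ u, f x := fun f => by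
    rw [← Finset.union_sdiff_right, Finset.sum_sdiff Finset.subset_union_right]
  have hWW' : W' + W = 1 := by rw [← hsplit, hp.sum_eq_one hsu]
  have hW' : 0 ≤ W' := Finset.sum_nonneg fun x _ => hp.1 x
  have hlogn : 0 ≤ log n := log_nonneg hn
  have hout : ∑ x ∈ s \ u, negMulLog (p x) ≤ W' * (2 * log n) + negMulLog ε := by
    have hcard : (#(s \ u) : ℝ) ≤ n ^ 2 :=
      le_trans (by exact_mod_cast card_le_card sdiff_subset) hsn
    have := sum_negMulLog_le (fun x _ => hp.1 x) hcard
    rw [log_pow, Nat.cast_ofNat] at this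
    linarith [negMulLog_le_negMulLog hW' (by linarith : W' ≤ ε) hε]
  have hin : ∑ x ∈ u, negMulLog (p x) ≤ W * log n + W' := by
    have := sum_negMulLog_le (fun x _ => hp.1 x) hun
    linarith [negMulLog_le_one_sub_self (Finset.sum_nonneg fun x _ => hp.1 x : 0 ≤ W)]
  rw [entropy_eq_sum_negMulLog hsu, hsplit]
  nlinarith [mul_le_mul_of_nonneg_right (by linarith : W' ≤ ε) hlogn]

end IsPMF

end Entropy

section AddCommGroup

variable {G : Type*} [AddCommGroup G] {A B : Set G}

lemma AddSubgroup.coe_add_singleton (H : AddSubgroup G) (z : G) :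
    (H : Set G) + {z} = {x | z - x ∈ (H : Set G)} := by
  ext x
  rw [Set.add_singleton, Set.mem_image, Set.mem_ofPred_eq, SetLike.mem_coe, ← H.neg_mem_iff,
    neg_sub]
  exact ⟨by rintro ⟨h, hh, rfl⟩; simpa using hh, fun hx => ⟨x - z, hx, sub_add_cancel x z⟩⟩

lemma Set.ncard_add_singleton (s : Set G) (z : G) :
    (s + {z}).ncard = s.ncard := by
  rw [Set.add_singleton, Set.ncard_image_of_injective _ (add_left_injective z)]

lemma conv_uniformSet_apply (hA : A.Finite) (B : Set G) (z : G) :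
    conv (uniformSet A) (uniformSet B) z
      = (A ∩ {x | z - x ∈ B}).ncard / (A.ncard * B.ncard) := by
  have hterm : ∀ x, uniformSet A x * uniformSet B (z - x)
      = (A ∩ {x | z - x ∈ B}).indicator (fun _ => ((A.ncard : ℝ) * B.ncard)⁻¹) x := by
    intro x
    by_cases hx : x ∈ A <;> by_cases hzx : z - x ∈ B <;> simp [uniformSet, hx, hzx, mul_comm]
  simp only [conv, hterm, finsum_indicator_const (hA.inter_of_left _), div_eq_mul_inv]

lemma sum_conv_uniformSet (hA : A.Finite) (hB : B.Finite) (s : Finset G) :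
    ∑ z ∈ s, conv (uniformSet A) (uniformSet B) z
      = {p : G × G | p.1 ∈ A ∧ p.2 ∈ B ∧ p.1 + p.2 ∈ (s : Set G)}.ncard
          / (A.ncard * B.ncard) := by
  classical
  set P := (hA.toFinset ×ˢ hB.toFinset).filter fun p => p.1 + p.2 ∈ s
  have hP : {p : G × G | p.1 ∈ A ∧ p.2 ∈ B ∧ p.1 + p.2 ∈ (s : Set G)} = P := by
    ext; simp [P, and_assoc]
  have hfiber : ∀ z ∈ s, (A ∩ {x | z - x ∈ B}).ncard = #(P.filter fun p => p.1 + p.2 = z) := by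
    intro z hz
    have : (P.filter fun p => p.1 + p.2 = z : Set (G × G))
        = (fun x => (x, z - x)) '' (A ∩ {x | z - x ∈ B}) := by
      ext ⟨a, b⟩
      simp only [P, coe_filter, mem_filter, mem_product, Set.Finite.mem_toFinset, Set.mem_ofPred,
        Set.mem_image, Set.mem_inter_iff, Prod.mk.injEq]
      constructor
      · rintro ⟨⟨⟨ha, hb⟩, -⟩, rfl⟩
        exact ⟨a, ⟨ha, by simpa using hb⟩, rfl, by abel⟩
      · rintro ⟨a, ⟨ha, hb⟩, rfl, rfl⟩
        exact ⟨⟨⟨ha, hb⟩, by simpa using hz⟩, by abel⟩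
    rw [← Set.ncard_coe_finset, this,
      Set.ncard_image_of_injective _ fun x y h => (Prod.mk.inj h).1]
  simp only [conv_uniformSet_apply hA, ← Finset.sum_div]
  rw [hP, Set.ncard_coe_finset, card_eq_sum_card_fiberwise (s := P) (f := fun p => p.1 + p.2)
    (t := s) fun p hp => (mem_filter.1 hp).2]
  push_cast
  rw [Finset.sum_congr rfl fun z hz => congrArg (Nat.cast (R := ℝ)) (hfiber z hz)]

lemma support_conv_uniformSet_subset (hA : A.Finite) (B : Set G) :
    Function.support (conv (uniformSet A) (uniformSet B)) ⊆ A + B := by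
  intro z hz
  rw [Function.mem_support, conv_uniformSet_apply hA] at hz
  obtain ⟨x, hxA, hxB⟩ : (A ∩ {x | z - x ∈ B}).Nonempty :=
    Set.nonempty_of_ncard_ne_zero fun h => hz (by simp [h])
  exact ⟨x, hxA, z - x, hxB, add_sub_cancel x z⟩

lemma isPMF_conv_uniformSet (hA : A.Finite) (hB : B.Finite) (hA0 : A.Nonempty)
    (hB0 : B.Nonempty) : IsPMF (conv (uniformSet A) (uniformSet B)) := by
  classical
  have hsupp : Function.support (conv (uniformSet A) (uniformSet B)) ⊆ (hA.add hB).toFinset := by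
    simpa using support_conv_uniformSet_subset hA B
  refine ⟨fun z => by rw [conv_uniformSet_apply hA]; positivity,
    (hA.add hB).subset (support_conv_uniformSet_subset hA B), ?_⟩
  have hall : {p : G × G | p.1 ∈ A ∧ p.2 ∈ B ∧ p.1 + p.2 ∈ ((hA.add hB).toFinset : Set G)}
      = A ×ˢ B := by
    ext ⟨a, b⟩
    simpa using fun ha hb => Set.add_mem_add ha hb
  have hA0' : (A.ncard : ℝ) ≠ 0 := by exact_mod_cast ((Set.ncard_pos hA).2 hA0).ne'
  have hB0' : (B.ncard : ℝ) ≠ 0 := by exact_mod_cast ((Set.ncard_pos hB).2 hB0).ne'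
  rw [finsum_eq_sum_of_support_subset _ hsupp, sum_conv_uniformSet hA hB, hall,
    Set.ncard_prod, Nat.cast_mul, div_self (mul_ne_zero hA0' hB0')]

lemma IsDistribApproxGroup.entropy_conv_sub_le {ε : ℝ} (hAε : IsDistribApproxGroup ε A)
    (hA : A.Finite) (hA0 : A.Nonempty) (hε0 : 0 < ε) (hε : ε ≤ exp (-1)) :
    entropy (conv (uniformSet A) (uniformSet A)) - entropy (uniformSet A)
      ≤ 2 * ε * log (ε⁻¹ * A.ncard) := by
  classical
  obtain ⟨U, hU, hpairs⟩ := hAε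
  have hA1 : 0 < A.ncard := (Set.ncard_pos hA).2 hA0
  have hn : (1 : ℝ) ≤ A.ncard := by exact_mod_cast hA1
  have hUfin : U.Finite := Set.finite_of_ncard_pos (hU ▸ hA1)
  have hsn : (#(hA.add hA).toFinset : ℝ) ≤ (A.ncard : ℝ) ^ 2 := by
    rw [Set.Finite.toFinset_add hA hA, sq, Set.ncard_eq_toFinset_card A hA]
    exact_mod_cast card_add_le
  have hun : (#hUfin.toFinset : ℝ) ≤ A.ncard := by
    rw [← Set.ncard_eq_toFinset_card U hUfin, hU]
  have hu : 1 - ε ≤ ∑ z ∈ hUfin.toFinset, conv (uniformSet A) (uniformSet A) z := by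
    rw [sum_conv_uniformSet hA hA, hUfin.coe_toFinset, le_div_iff₀ (by positivity)]
    linarith
  have hent := (isPMF_conv_uniformSet hA hA hA0 hA0).entropy_le_of_one_sub_le_sum
    (by simpa using support_conv_uniformSet_subset hA A) hn hsn hun hu hε
  have hlogε : log ε ≤ -1 := (log_le_iff_le_exp hε0).2 hε
  have hlogn : 0 ≤ log A.ncard := log_nonneg hn
  rw [entropy_uniformSet hA hA0, log_mul (inv_ne_zero hε0.ne') (by positivity), log_inv]
  simp only [negMulLog] at hent
  linarith [mul_nonneg hε0.le (by linarith : 0 ≤ -log ε - 1 + log A.ncard)]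

lemma exists_ncard_symmDiff_coset_le (hA : A.Finite) (hA0 : A.Nonempty) (H : AddSubgroup G)
    (hH : (H : Set G).Finite) :
    ∃ x, ((A ∆ ((H : Set G) + {x})).ncard : ℝ)
      ≤ 2 * rdist (uniformSet A) (uniformSet (H : Set G))
        * (exp (2 * rdist (uniformSet A) (uniformSet (H : Set G))) + 1) * (H : Set G).ncard := by
  have hH0 : (H : Set G).Nonempty := ⟨0, H.zero_mem⟩
  obtain ⟨x, hpos, hx⟩ := (isPMF_conv_uniformSet hA hH hA0 hH0).exists_neg_log_le_entropy
  refine ⟨x, ?_⟩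
  rw [conv_uniformSet_apply hA, ← H.coe_add_singleton] at hpos hx
  set C := (H : Set G) + {x}
  have hC : C.Finite := hH.add (Set.finite_singleton x)
  have hA' : (0 : ℝ) < A.ncard := by exact_mod_cast (Set.ncard_pos hA).2 hA0
  have hH' : (0 : ℝ) < (H : Set G).ncard := by exact_mod_cast (Set.ncard_pos hH).2 hH0
  have hN : (0 : ℝ) < (A ∩ C).ncard := (div_pos_iff_of_pos_right (by positivity)).1 hpos
  have hNA : ((A ∩ C).ncard : ℝ) ≤ A.ncard := by
    exact_mod_cast Set.ncard_le_ncard Set.inter_subset_left hA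
  have hNH : ((A ∩ C).ncard : ℝ) ≤ (H : Set G).ncard := by
    exact_mod_cast (Set.ncard_le_ncard Set.inter_subset_right hC).trans_eq
      (Set.ncard_add_singleton _ x)
  have hlog : (log A.ncard + log (H : Set G).ncard) / 2
      - rdist (uniformSet A) (uniformSet (H : Set G)) ≤ log (A ∩ C).ncard := by
    rw [rdist, entropy_uniformSet hA hA0, entropy_uniformSet hH hH0]
    rw [log_div hN.ne' (by positivity), log_mul hA'.ne' hH'.ne'] at hx
    linarith
  have hsymm : ((A ∆ C).ncard : ℝ) + 2 * (A ∩ C).ncard = A.ncard + (H : Set G).ncard := by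
    exact_mod_cast (Set.ncard_add_singleton (H : Set G) x) ▸
      Set.ncard_symmDiff_add_two_mul_ncard_inter hA hC
  linarith [add_sub_two_mul_le_of_log_le hN hNA hNH hlog]

end AddCommGroup

universe u

theorem main_theorem_from_black_box (γ : ℝ) (hγ : 0 < γ)
    (blackbox : ∀ (G : Type u) [AddCommGroup G] (A : Set G), A.Finite → A.Nonempty →
      entropy (conv (uniformSet A) (uniformSet A)) - entropy (uniformSet A) ≤ γ →
      ∃ H : AddSubgroup G, (H : Set G).Finite ∧
        rdist (uniformSet A) (uniformSet (H : Set G)) ≤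
          12 * (entropy (conv (uniformSet A) (uniformSet A)) - entropy (uniformSet A))) :
    ∃ θ : ℝ, 0 < θ ∧
      ∀ (G : Type u) [AddCommGroup G] (ε : ℝ), 0 < ε → ε < Real.exp (-2) →
        ∀ A : Set G, A.Finite → A.Nonempty → IsDistribApproxGroup ε A →
          240 * Real.log (ε⁻¹ * A.ncard) * ε ≤ θ →
          ∃ (H : AddSubgroup G) (x : G), (H : Set G).Finite ∧
            ((A ∆ ((H : Set G) + {x})).ncard : ℝ)
              ≤ 240 * Real.log (ε⁻¹ * A.ncard) * ε * (H : Set G).ncard := by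
  refine ⟨min 1 (100 * γ), by positivity, fun G _ ε hε0 hε A hA hA0 hAε hθ => ?_⟩
  set K := 240 * log (ε⁻¹ * A.ncard) * ε
  have hε1 : ε ≤ exp (-1) := hε.le.trans (exp_le_exp.2 (by norm_num))
  have hΔ := hAε.entropy_conv_sub_le hA hA0 hε0 hε1
  obtain ⟨H, hH, hd⟩ := blackbox G A hA hA0 (by linarith [min_le_right 1 (100 * γ)])
  obtain ⟨x, hx⟩ := exists_ncard_symmDiff_coset_le hA hA0 H hH
  refine ⟨H, x, hH, hx.trans (mul_le_mul_of_nonneg_right ?_ (Nat.cast_nonneg _))⟩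
  set d := rdist (uniformSet A) (uniformSet (H : Set G))
  have hdK : d ≤ K / 10 := by linarith
  have hK1 : K ≤ 1 := hθ.trans (min_le_left _ _)
  have hK0 : 0 ≤ K := by
    have : 1 ≤ ε⁻¹ * A.ncard := one_le_mul_of_one_le_of_one_le
      (one_le_inv₀ hε0 |>.2 (hε1.trans (exp_le_one_iff.2 (by norm_num))))
      (by exact_mod_cast (Set.ncard_pos hA).2 hA0)
    have := log_nonneg this
    positivity
  have hexp : exp (2 * d) < 3 :=
    (exp_le_exp.2 (by linarith : 2 * d ≤ 1)).trans_lt (exp_one_lt_d9.trans (by norm_num))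
  nlinarith [mul_le_mul_of_nonneg_right hdK (by positivity : 0 ≤ exp (2 * d) + 1)]
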